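/- Let d ≥ 1, let R₀ = ∏_{i=1}^d I_i ⊆ ℝ^d be a compact rectangle, and let f be a regular curved function on [a₀, a₀+δ₀] × R₀ with data (c₀, α, C_α, η, A_η) and sup-norm bounds B₁ ≥ ‖∂_a f‖_∞, B₂ ≥ ‖∇_x f‖_∞, B₃ ≥ ‖∇_x ∂_a f‖_∞, B₄ ≥ ‖D²_x f‖_∞. Then there exist constants ε > 0 and C > 0 depending only on d, c₀, α, C_α, η, A_η, B₁, B₂, B₃, B₄ such that: for all a, a' ∈ [a₀, a₀+δ₀] with 0 < |a' − a| ≤ ε, and for every x₁ ∈ R₀ whose Euclidean distance to the boundary of R₀ is at least C |a' − a|, there exists u ∈ ℝ^d with |u| ≤ C |a' − a|, x₁ − u ∈ R₀, and ∇_x f(a', x₁ − u) = ∇_x f(a, x₁). -/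

import Mathlib

open MeasureTheory Metric Set

noncomputable section

/-- The compact axis-parallel rectangle `∏ i, [lo i, hi i]` in `ℝ^d`. -/
def Rect (d : ℕ) (lo hi : Fin d → ℝ) : Set (EuclideanSpace ℝ (Fin d)) :=
  {x | ∀ i, x i ∈ Set.Icc (lo i) (hi i)}

/-- `f : [a₀, a₀+δ₀] × R₀ → ℝ` is a *regular curved function* with data
`(c₀, α, Cα, η, Aη)` (Definition 1.2 of the paper).  The functions `fa`, `fx`, `fax`, `fxx`
are witnesses for `∂ₐf`, `∇ₓf`, `∇ₓ∂ₐf` and the Hessian `D²ₓf` respectively. -/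
structure IsRegularCurvedFunction (d : ℕ) (a₀ δ₀ : ℝ) (lo hi : Fin d → ℝ)
    (f fa : ℝ → EuclideanSpace ℝ (Fin d) → ℝ)
    (fx fax : ℝ → EuclideanSpace ℝ (Fin d) → EuclideanSpace ℝ (Fin d))
    (fxx : ℝ → EuclideanSpace ℝ (Fin d) → Matrix (Fin d) (Fin d) ℝ)
    (c₀ α Cα η Aη : ℝ) : Prop where
  δ₀_pos : 0 < δ₀
  rect_pos : ∀ i, lo i < hi i
  c₀_pos : 0 < c₀
  α_mem : α ∈ Set.Ioc (0:ℝ) 1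
  Cα_pos : 0 < Cα
  η_mem : η ∈ Set.Ioc (0:ℝ) 1
  Aη_pos : 0 < Aη
  /-- `fa` is the partial derivative of `f` in the parameter `a`. -/
  hasDeriv_a : ∀ a ∈ Set.Icc a₀ (a₀ + δ₀), ∀ x ∈ Rect d lo hi,
    HasDerivWithinAt (fun t => f t x) (fa a x) (Set.Icc a₀ (a₀ + δ₀)) a
  /-- `fx` is the gradient of `f` in `x`. -/
  hasGrad_x : ∀ a ∈ Set.Icc a₀ (a₀ + δ₀), ∀ x ∈ Rect d lo hi,
    HasGradientWithinAt (f a) (fx a x) (Rect d lo hi) x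
  /-- `fax` is the gradient in `x` of `∂ₐ f`. -/
  hasGrad_ax : ∀ a ∈ Set.Icc a₀ (a₀ + δ₀), ∀ x ∈ Rect d lo hi,
    HasGradientWithinAt (fun y => fa a y) (fax a x) (Rect d lo hi) x
  /-- `fxx` is the Hessian matrix of `f` in `x`. -/
  hasHessian : ∀ a ∈ Set.Icc a₀ (a₀ + δ₀), ∀ x ∈ Rect d lo hi, ∀ l,
    HasGradientWithinAt (fun y => fx a y l)
      ((WithLp.equiv 2 (Fin d → ℝ)).symm fun k => fxx a x k l) (Rect d lo hi) x
  /-- The curvature condition (1.3): `|det D²ₓ f| ≥ c₀`. -/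
  curved : ∀ a ∈ Set.Icc a₀ (a₀ + δ₀), ∀ x ∈ Rect d lo hi, c₀ ≤ |(fxx a x).det|
  /-- Hölder continuity (1.4) of the Hessian in `x` (entrywise). -/
  hess_holder : ∀ a ∈ Set.Icc a₀ (a₀ + δ₀), ∀ x ∈ Rect d lo hi, ∀ x' ∈ Rect d lo hi,
    ∀ k l, |fxx a x k l - fxx a x' k l| ≤ Cα * ‖x - x'‖ ^ α
  /-- Hölder continuity (1.5) of `∂ₐ f` in `a`. -/
  fa_holder : ∀ a ∈ Set.Icc a₀ (a₀ + δ₀), ∀ a' ∈ Set.Icc a₀ (a₀ + δ₀), ∀ x ∈ Rect d lo hi,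
    |fa a x - fa a' x| ≤ Aη * |a - a'| ^ η
  /-- Hölder continuity (1.6) of `∇ₓ f` in `a`. -/
  fx_holder : ∀ a ∈ Set.Icc a₀ (a₀ + δ₀), ∀ a' ∈ Set.Icc a₀ (a₀ + δ₀), ∀ x ∈ Rect d lo hi,
    ‖fx a x - fx a' x‖ ≤ Aη * |a - a'| ^ η

/-!
Put `h = |a' - a|` and `r = C h`; the distance condition puts `closedBall x₁ r` inside the
rectangle. Since `‖∇ₓ∂ₐf‖ ≤ B₃`, the difference `f(a', ·) - f(a, ·)` is `B₃ h`-Lipschitz, so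
`‖∇ₓf(a', x₁) - ∇ₓf(a, x₁)‖ ≤ B₃ h`. On `closedBall x₁ r` the Hölder bound on the Hessian makes
`∇ₓf(a', ·)` a perturbation of its linearisation `D²ₓf(a', x₁)` with Lipschitz constant
`d² Cα r^α`, and Cramer's rule together with `|det D²ₓf| ≥ c₀` bounds the inverse of the
linearisation by a constant `K`. Once `h ≤ ε` the perturbation is at most `1 / (2K)`, and the
surjectivity half of the quantitative inverse function theorem shows that the image of
`closedBall x₁ r` under `∇ₓf(a', ·)` contains the ball of radius `r / (2K) ≥ B₃ h` around
`∇ₓf(a', x₁)`, hence contains `∇ₓf(a, x₁)`.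
-/

open Matrix (toEuclideanCLM)
open scoped NNReal Nat Matrix Topology

lemma EuclideanSpace.norm_le_sum_abs {n : Type*} [Fintype n] (y : EuclideanSpace ℝ n) :
    ‖y‖ ≤ ∑ i, |y i| := by
  classical
  conv_lhs => rw [← (EuclideanSpace.basisFun n ℝ).sum_repr y]
  refine (norm_sum_le _ _).trans_eq ?_
  simp [norm_smul]

namespace Matrix

variable {n : Type*} [Fintype n] [DecidableEq n]

lemma norm_toEuclideanCLM_le {A : Matrix n n ℝ} {B : ℝ} (hB : 0 ≤ B) (hA : ∀ i j, |A i j| ≤ B) :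
    ‖toEuclideanCLM (𝕜 := ℝ) A‖ ≤ Fintype.card n ^ 2 * B := by
  refine ContinuousLinearMap.opNorm_le_bound _ (by positivity) fun x => ?_
  calc ‖toEuclideanCLM (𝕜 := ℝ) A x‖ ≤ ∑ i, |(A *ᵥ x.ofLp) i| :=
        EuclideanSpace.norm_le_sum_abs _
    _ ≤ ∑ _i : n, ∑ _j : n, B * ‖x‖ := by
        gcongr with i
        refine (Finset.abs_sum_le_sum_abs _ _).trans (Finset.sum_le_sum fun j _ => ?_)
        rw [abs_mul]
        exact mul_le_mul (hA i j) (PiLp.norm_apply_le x j) (abs_nonneg _) hB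
    _ = Fintype.card n ^ 2 * B * ‖x‖ := by
        simp only [Finset.sum_const, Finset.card_univ, nsmul_eq_mul]
        ring

/-- `A⁻¹ = adj A / det A`, and each entry of `adj A` is a minor, bounded through the Leibniz
formula. -/
lemma abs_inv_apply_le {A : Matrix n n ℝ} {c B : ℝ} (hc : 0 < c) (hdet : c ≤ |A.det|)
    (hA : ∀ i j, |A i j| ≤ B) (i j : n) :
    |A⁻¹ i j| ≤ (Fintype.card n)! * max 1 B ^ Fintype.card n / c := by
  have hadj : |A.adjugate i j| ≤ (Fintype.card n)! * max 1 B ^ Fintype.card n := by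
    rw [adjugate_apply, ← nsmul_eq_mul]
    refine det_le (abv := AbsoluteValue.abs) fun k l => ?_
    rw [updateRow_apply]
    split_ifs
    · rw [Pi.single_apply]
      split_ifs <;> simp
    · exact (hA k l).trans (le_max_right _ _)
  rw [inv_def, smul_apply, smul_eq_mul, Ring.inverse_eq_inv', abs_mul, abs_inv, div_eq_inv_mul]
  exact mul_le_mul (inv_anti₀ hc hdet) hadj (abs_nonneg _) (by positivity)

lemma toEuclideanCLM_apply_toEuclideanCLM_inv {A : Matrix n n ℝ} (hA : IsUnit A.det)
    (y : EuclideanSpace ℝ n) :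
    toEuclideanCLM (𝕜 := ℝ) A (toEuclideanCLM (𝕜 := ℝ) A⁻¹ y) = y := by
  rw [← mul_apply_eq_comp, ← map_mul, mul_nonsing_inv A hA, map_one, one_apply_eq_self]

/-- Recording a bound `K` as the norm, instead of `‖toEuclideanCLM A⁻¹‖` itself, makes the radius
in `ApproximatesLinearOn.surjOn_closedBall_of_nonlinearRightInverse` explicit in `K`. -/
def toEuclideanCLMRightInverse (A : Matrix n n ℝ) (hA : IsUnit A.det) (K : ℝ≥0)
    (hK : ‖toEuclideanCLM (𝕜 := ℝ) A⁻¹‖ ≤ K) :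
    (toEuclideanCLM (𝕜 := ℝ) A).NonlinearRightInverse where
  toFun := toEuclideanCLM (𝕜 := ℝ) A⁻¹
  nnnorm := K
  bound' y := ((toEuclideanCLM (𝕜 := ℝ) A⁻¹).le_opNorm y).trans (by gcongr)
  right_inv' := toEuclideanCLM_apply_toEuclideanCLM_inv hA

end Matrix

lemma hasFDerivWithinAt_of_hasGradientWithinAt_apply {n : Type*} [Fintype n] [DecidableEq n]
    {F : EuclideanSpace ℝ n → EuclideanSpace ℝ n} {H : Matrix n n ℝ}
    {s : Set (EuclideanSpace ℝ n)} {x : EuclideanSpace ℝ n}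
    (hF : ∀ l, HasGradientWithinAt (fun y => F y l)
      ((WithLp.equiv 2 (n → ℝ)).symm fun k => H k l) s x) :
    HasFDerivWithinAt F (toEuclideanCLM (𝕜 := ℝ) Hᵀ) s x := by
  refine hasFDerivWithinAt_euclidean.2 fun l => ?_
  convert (hF l).hasFDerivWithinAt using 1
  ext u
  simp [PiLp.inner_apply, Matrix.mulVec, dotProduct, mul_comm]

section MeanValue

variable {E : Type*} [NormedAddCommGroup E]

lemma Convex.approximatesLinearOn_of_hasFDerivWithinAt {F : Type*} [NormedSpace ℝ E]
    [NormedAddCommGroup F] [NormedSpace ℝ F] {f : E → F} {f' : E → E →L[ℝ] F} {L : E →L[ℝ] F}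
    {s : Set E} {c : ℝ≥0} (hs : Convex ℝ s) (hf : ∀ x ∈ s, HasFDerivWithinAt f (f' x) s x)
    (bound : ∀ x ∈ s, ‖f' x - L‖₊ ≤ c) : ApproximatesLinearOn f L s c :=
  ApproximatesLinearOn.approximatesLinearOn_iff_lipschitzOnWith.2 <|
    hs.lipschitzOnWith_of_nnnorm_hasFDerivWithin_le
      (fun x hx => (hf x hx).sub L.hasFDerivWithinAt) bound

lemma Convex.norm_image_sub_le_of_norm_hasGradientWithin_le [InnerProductSpace ℝ E]
    [CompleteSpace E] {g : E → ℝ} {g' : E → E} {s : Set E} {C : ℝ} (hs : Convex ℝ s)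
    (hg : ∀ x ∈ s, HasGradientWithinAt g (g' x) s x) (bound : ∀ x ∈ s, ‖g' x‖ ≤ C)
    {x y : E} (hx : x ∈ s) (hy : y ∈ s) : ‖g y - g x‖ ≤ C * ‖y - x‖ :=
  hs.norm_image_sub_le_of_norm_hasFDerivWithin_le (fun z hz => (hg z hz).hasFDerivWithinAt)
    (fun z hz => ((InnerProductSpace.toDual ℝ E).norm_map (g' z)).trans_le (bound z hz)) hx hy

lemma norm_sub_sub_le_of_hasDerivWithinAt_of_lipschitz {f g : ℝ → E → ℝ} {I : Set ℝ}
    {s : Set E} {K : ℝ} (hI : Convex ℝ I)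
    (hf : ∀ t ∈ I, ∀ x ∈ s, HasDerivWithinAt (fun t => f t x) (g t x) I t)
    (hg : ∀ t ∈ I, ∀ x ∈ s, ∀ y ∈ s, ‖g t x - g t y‖ ≤ K * ‖x - y‖)
    {a a' : ℝ} (ha : a ∈ I) (ha' : a' ∈ I) {x y : E} (hx : x ∈ s) (hy : y ∈ s) :
    ‖(f a' x - f a x) - (f a' y - f a y)‖ ≤ K * ‖x - y‖ * |a' - a| := by
  have := hI.norm_image_sub_le_of_norm_hasDerivWithin_le
    (fun t ht => (hf t ht x hx).sub (hf t ht y hy)) (fun t ht => hg t ht x hx y hy) ha ha'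
  rw [Real.norm_eq_abs (a' - a)] at this
  calc ‖(f a' x - f a x) - (f a' y - f a y)‖ = ‖(f a' x - f a' y) - (f a x - f a y)‖ := by
        ring_nf
    _ ≤ K * ‖x - y‖ * |a' - a| := this

end MeanValue

section Boundary

variable {E : Type*} [NormedAddCommGroup E] [NormedSpace ℝ E] [FiniteDimensional ℝ E]

lemma ball_infDist_frontier_subset {s : Set E} {x : E} (hx : x ∈ s) :
    ball x (infDist x (frontier s)) ⊆ s := by
  rcases eq_or_ne s univ with rfl | hs
  · exact subset_univ _
  obtain ⟨y, hy, hdist⟩ := exists_mem_frontier_infDist_compl_eq_dist hx hs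
  exact (ball_subset_ball (hdist ▸ infDist_le_dist_of_mem hy)).trans ball_infDist_compl_subset

lemma IsClosed.closedBall_subset_of_le_infDist_frontier {s : Set E} (hs : IsClosed s) {x : E}
    (hx : x ∈ s) {r : ℝ} (hr : r ≤ infDist x (frontier s)) : closedBall x r ⊆ s := by
  rcases eq_or_ne r 0 with rfl | hr0
  · simpa using hx
  rw [← closure_ball x hr0, ← hs.closure_eq]
  exact closure_mono ((ball_subset_ball hr).trans (ball_infDist_frontier_subset hx))

end Boundary

section Rect

variable {d : ℕ} {lo hi : Fin d → ℝ}

lemma isClosed_rect : IsClosed (Rect d lo hi) := by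
  simp only [Rect, ofPred_forall]
  exact isClosed_iInter fun i => isClosed_Icc.preimage (by fun_prop)

lemma convex_rect : Convex ℝ (Rect d lo hi) := by
  intro x hx y hy a b ha hb hab i
  simpa using convex_Icc (lo i) (hi i) (hx i) (hy i) ha hb hab

end Rect

lemma mul_rpow_le_of_le_rpow_inv {α L b t : ℝ} (hα : 0 < α) (hb : 0 < b) (ht : 0 ≤ t)
    (hle : t ≤ (b / max 1 L) ^ α⁻¹) : L * t ^ α ≤ b := by
  have hL : 0 < max 1 L := one_pos.trans_le (le_max_left _ _)
  rw [Real.le_rpow_inv_iff_of_pos ht (by positivity) hα, le_div_iff₀' hL] at hle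
  exact (mul_le_mul_of_nonneg_right (le_max_right _ _) (Real.rpow_nonneg ht α)).trans hle

namespace IsRegularCurvedFunction

variable {d : ℕ} {a₀ δ₀ : ℝ} {lo hi : Fin d → ℝ} {f fa : ℝ → EuclideanSpace ℝ (Fin d) → ℝ}
  {fx fax : ℝ → EuclideanSpace ℝ (Fin d) → EuclideanSpace ℝ (Fin d)}
  {fxx : ℝ → EuclideanSpace ℝ (Fin d) → Matrix (Fin d) (Fin d) ℝ} {c₀ α Cα η Aη : ℝ}

lemma norm_fx_sub_le (hreg : IsRegularCurvedFunction d a₀ δ₀ lo hi f fa fx fax fxx c₀ α Cα η Aη)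
    {B₃ : ℝ} (hB₃ : ∀ a ∈ Icc a₀ (a₀ + δ₀), ∀ x ∈ Rect d lo hi, ‖fax a x‖ ≤ B₃)
    {a a' : ℝ} (ha : a ∈ Icc a₀ (a₀ + δ₀)) (ha' : a' ∈ Icc a₀ (a₀ + δ₀))
    {x : EuclideanSpace ℝ (Fin d)} (hx : Rect d lo hi ∈ 𝓝 x) :
    ‖fx a' x - fx a x‖ ≤ B₃ * |a' - a| := by
  have hB₃0 : 0 ≤ B₃ := (norm_nonneg _).trans (hB₃ a ha x (mem_of_mem_nhds hx))
  have hfa : ∀ t ∈ Icc a₀ (a₀ + δ₀), ∀ y ∈ Rect d lo hi, ∀ z ∈ Rect d lo hi,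
      ‖fa t y - fa t z‖ ≤ B₃ * ‖y - z‖ := fun t ht y hy z hz =>
    convex_rect.norm_image_sub_le_of_norm_hasGradientWithin_le (hreg.hasGrad_ax t ht)
      (hB₃ t ht) hz hy
  have hdiff := ((hreg.hasGrad_x a' ha' x (mem_of_mem_nhds hx)).hasFDerivWithinAt.hasFDerivAt
    hx).sub ((hreg.hasGrad_x a ha x (mem_of_mem_nhds hx)).hasFDerivWithinAt.hasFDerivAt hx)
  rw [← map_sub] at hdiff
  rw [← (InnerProductSpace.toDual ℝ _).norm_map]
  refine hdiff.le_of_lip' (by positivity) ?_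
  filter_upwards [hx] with y hy
  simpa [mul_right_comm] using norm_sub_sub_le_of_hasDerivWithinAt_of_lipschitz (convex_Icc _ _)
    (fun t ht z hz => hreg.hasDeriv_a t ht z hz) hfa ha ha' hy (mem_of_mem_nhds hx)

lemma approximatesLinearOn_fx
    (hreg : IsRegularCurvedFunction d a₀ δ₀ lo hi f fa fx fax fxx c₀ α Cα η Aη)
    {a : ℝ} (ha : a ∈ Icc a₀ (a₀ + δ₀)) {x₁ : EuclideanSpace ℝ (Fin d)} (hx₁ : x₁ ∈ Rect d lo hi)
    {r : ℝ} (hr : 0 ≤ r) (hball : closedBall x₁ r ⊆ Rect d lo hi) :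
    ApproximatesLinearOn (fx a) (toEuclideanCLM (𝕜 := ℝ) (fxx a x₁)ᵀ) (closedBall x₁ r)
      (d ^ 2 * (Cα * r ^ α)).toNNReal := by
  have hCr : 0 ≤ Cα * r ^ α := mul_nonneg hreg.Cα_pos.le (Real.rpow_nonneg hr α)
  refine (convex_closedBall x₁ r).approximatesLinearOn_of_hasFDerivWithinAt
    (fun y hy => (hasFDerivWithinAt_of_hasGradientWithinAt_apply
      (hreg.hasHessian a ha y (hball hy))).mono hball) fun y hy => ?_
  rw [Real.le_toNNReal_iff_coe_le (by positivity), coe_nnnorm, ← map_sub, ← Matrix.transpose_sub]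
  refine (Matrix.norm_toEuclideanCLM_le hCr fun k l => ?_).trans_eq (by rw [Fintype.card_fin])
  refine (hreg.hess_holder a ha y (hball hy) x₁ hx₁ l k).trans ?_
  exact mul_le_mul_of_nonneg_left (Real.rpow_le_rpow (norm_nonneg _)
    (mem_closedBall_iff_norm.1 hy) hreg.α_mem.1.le) hreg.Cα_pos.le

lemma norm_toEuclideanCLM_inv_le
    (hreg : IsRegularCurvedFunction d a₀ δ₀ lo hi f fa fx fax fxx c₀ α Cα η Aη)
    {B₄ : ℝ} (hB₄ : ∀ a ∈ Icc a₀ (a₀ + δ₀), ∀ x ∈ Rect d lo hi, ∀ k l, |fxx a x k l| ≤ B₄)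
    {a : ℝ} (ha : a ∈ Icc a₀ (a₀ + δ₀)) {x : EuclideanSpace ℝ (Fin d)} (hx : x ∈ Rect d lo hi) :
    ‖toEuclideanCLM (𝕜 := ℝ) (fxx a x)ᵀ⁻¹‖ ≤ d ^ 2 * (d ! * max 1 B₄ ^ d / c₀) := by
  have hc₀ := hreg.c₀_pos
  have hdet : c₀ ≤ |(fxx a x)ᵀ.det| := (fxx a x).det_transpose.symm ▸ hreg.curved a ha x hx
  refine (Matrix.norm_toEuclideanCLM_le (by positivity)
    (Matrix.abs_inv_apply_le hc₀ hdet fun k l => hB₄ a ha x hx l k)).trans_eq ?_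
  rw [Fintype.card_fin]

lemma exists_fx_eq (hreg : IsRegularCurvedFunction d a₀ δ₀ lo hi f fa fx fax fxx c₀ α Cα η Aη)
    {B₃ B₄ : ℝ} (hB₃ : ∀ a ∈ Icc a₀ (a₀ + δ₀), ∀ x ∈ Rect d lo hi, ‖fax a x‖ ≤ B₃)
    (hB₄ : ∀ a ∈ Icc a₀ (a₀ + δ₀), ∀ x ∈ Rect d lo hi, ∀ k l, |fxx a x k l| ≤ B₄)
    {a a' : ℝ} (ha : a ∈ Icc a₀ (a₀ + δ₀)) (ha' : a' ∈ Icc a₀ (a₀ + δ₀))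
    {x₁ : EuclideanSpace ℝ (Fin d)} (hx₁ : x₁ ∈ Rect d lo hi) {r K : ℝ} (hr : 0 < r)
    (hball : closedBall x₁ r ⊆ Rect d lo hi) (hK : d ^ 2 * (d ! * max 1 B₄ ^ d / c₀) ≤ K)
    (hK₀ : 0 < K) (hsmall : d ^ 2 * (Cα * r ^ α) ≤ (2 * K)⁻¹)
    (hrad : 2 * K * B₃ * |a' - a| ≤ r) :
    ∃ x ∈ closedBall x₁ r, fx a' x = fx a x₁ := by
  have hunit : IsUnit (fxx a' x₁)ᵀ.det := by
    rw [Matrix.det_transpose, isUnit_iff_ne_zero, ← abs_pos]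
    exact hreg.c₀_pos.trans_le (hreg.curved a' ha' x₁ hx₁)
  have hinv : ‖toEuclideanCLM (𝕜 := ℝ) (fxx a' x₁)ᵀ⁻¹‖ ≤ K.toNNReal :=
    ((hreg.norm_toEuclideanCLM_inv_le hB₄ ha' hx₁).trans hK).trans (Real.le_coe_toNNReal K)
  refine ApproximatesLinearOn.surjOn_closedBall_of_nonlinearRightInverse
    (hreg.approximatesLinearOn_fx ha' hx₁ hr.le hball)
    (Matrix.toEuclideanCLMRightInverse _ hunit K.toNNReal hinv) hr.le subset_rfl ?_
  have hgap := hreg.norm_fx_sub_le hB₃ ha ha'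
    (Filter.mem_of_superset (closedBall_mem_nhds x₁ hr) hball)
  rw [mem_closedBall, dist_eq_norm, norm_sub_rev]
  have hc : 0 ≤ (d : ℝ) ^ 2 * (Cα * r ^ α) :=
    mul_nonneg (sq_nonneg _) (mul_nonneg hreg.Cα_pos.le (Real.rpow_nonneg hr.le α))
  simp only [Matrix.toEuclideanCLMRightInverse, Real.coe_toNNReal _ hK₀.le, Real.coe_toNNReal _ hc]
  calc ‖fx a' x₁ - fx a x₁‖ ≤ B₃ * |a' - a| := hgap
    _ ≤ (K⁻¹ - (2 * K)⁻¹) * r := by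
        rw [show K⁻¹ - (2 * K)⁻¹ = (2 * K)⁻¹ by field_simp; ring, inv_mul_eq_div,
          le_div_iff₀ (by positivity)]
        linarith
    _ ≤ (K⁻¹ - d ^ 2 * (Cα * r ^ α)) * r := by gcongr

end IsRegularCurvedFunction

theorem tangency_translation_exists_general (d : ℕ)
    (c₀ α Cα η Aη B₁ B₂ B₃ B₄ : ℝ) :
    ∃ ε : ℝ, 0 < ε ∧ ∃ C : ℝ, 0 < C ∧
      ∀ (a₀ δ₀ : ℝ) (lo hi : Fin d → ℝ)
        (f fa : ℝ → EuclideanSpace ℝ (Fin d) → ℝ)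
        (fx fax : ℝ → EuclideanSpace ℝ (Fin d) → EuclideanSpace ℝ (Fin d))
        (fxx : ℝ → EuclideanSpace ℝ (Fin d) → Matrix (Fin d) (Fin d) ℝ),
        IsRegularCurvedFunction d a₀ δ₀ lo hi f fa fx fax fxx c₀ α Cα η Aη →
        (∀ a ∈ Set.Icc a₀ (a₀ + δ₀), ∀ x ∈ Rect d lo hi, |fa a x| ≤ B₁) →
        (∀ a ∈ Set.Icc a₀ (a₀ + δ₀), ∀ x ∈ Rect d lo hi, ‖fx a x‖ ≤ B₂) →
        (∀ a ∈ Set.Icc a₀ (a₀ + δ₀), ∀ x ∈ Rect d lo hi, ‖fax a x‖ ≤ B₃) →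
        (∀ a ∈ Set.Icc a₀ (a₀ + δ₀), ∀ x ∈ Rect d lo hi, ∀ k l, |fxx a x k l| ≤ B₄) →
        ∀ a ∈ Set.Icc a₀ (a₀ + δ₀), ∀ a' ∈ Set.Icc a₀ (a₀ + δ₀),
          0 < |a' - a| → |a' - a| ≤ ε →
          ∀ x₁ ∈ Rect d lo hi,
            C * |a' - a| ≤ Metric.infDist x₁ (frontier (Rect d lo hi)) →
            ∃ u : EuclideanSpace ℝ (Fin d),
              ‖u‖ ≤ C * |a' - a| ∧ x₁ - u ∈ Rect d lo hi ∧
              fx a' (x₁ - u) = fx a x₁ := by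
  set K := max 1 ((d : ℝ) ^ 2 * (d ! * max 1 B₄ ^ d / c₀))
  set C := 2 * K * |B₃| + 1
  have hK : 0 < K := one_pos.trans_le (le_max_left _ _)
  have hC : 0 < C := by positivity
  refine ⟨((2 * K)⁻¹ / max 1 ((d : ℝ) ^ 2 * Cα)) ^ α⁻¹ / C, by positivity, C, hC, ?_⟩
  intro a₀ δ₀ lo hi f fa fx fax fxx hreg _ _ hB₃ hB₄ a ha a' ha' hpos hle x₁ hx₁ hinf
  have hα := hreg.α_mem.1
  have hr : 0 < C * |a' - a| := mul_pos hC hpos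
  have hsmall : d ^ 2 * (Cα * (C * |a' - a|) ^ α) ≤ (2 * K)⁻¹ := by
    rw [← mul_assoc]
    exact mul_rpow_le_of_le_rpow_inv hα (by positivity) hr.le ((le_div_iff₀' hC).1 hle)
  have hrad : 2 * K * B₃ * |a' - a| ≤ C * |a' - a| := by
    gcongr
    exact (mul_le_mul_of_nonneg_left (le_abs_self B₃) (by positivity)).trans (by linarith)
  have hball := isClosed_rect.closedBall_subset_of_le_infDist_frontier hx₁ hinf
  obtain ⟨x, hx, hfx⟩ :=
    hreg.exists_fx_eq hB₃ hB₄ ha ha' hx₁ hr hball (le_max_right _ _) hK hsmall hrad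
  refine ⟨x₁ - x, ?_, ?_, ?_⟩
  · rwa [← dist_eq_norm, dist_comm]
  · rw [sub_sub_cancel]
    exact hball hx
  · rw [sub_sub_cancel, hfx]

/-- **Quantitative implicit-function-theorem step (Step 1 of Section 2).**
For parameters `a, a'` that are close, and a point `x₁` sufficiently far from the
boundary of the rectangle, there is a small horizontal translation `u` making the
graph of `f(a', ·)`, after translation, tangent to the graph of `f(a, ·)` at `x₁`,
i.e. `∇ₓ f(a', x₁ - u) = ∇ₓ f(a, x₁)`.  The constants `ε, C` depend only on `d` and
the regularity data (not on the rectangle, `a₀` or `δ₀`). -/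
theorem tangency_translation_exists (d : ℕ) (hd : 1 ≤ d)
    (c₀ α Cα η Aη B₁ B₂ B₃ B₄ : ℝ) :
    ∃ ε : ℝ, 0 < ε ∧ ∃ C : ℝ, 0 < C ∧
      ∀ (a₀ δ₀ : ℝ) (lo hi : Fin d → ℝ)
        (f fa : ℝ → EuclideanSpace ℝ (Fin d) → ℝ)
        (fx fax : ℝ → EuclideanSpace ℝ (Fin d) → EuclideanSpace ℝ (Fin d))
        (fxx : ℝ → EuclideanSpace ℝ (Fin d) → Matrix (Fin d) (Fin d) ℝ),
        IsRegularCurvedFunction d a₀ δ₀ lo hi f fa fx fax fxx c₀ α Cα η Aη →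
        (∀ a ∈ Set.Icc a₀ (a₀ + δ₀), ∀ x ∈ Rect d lo hi, |fa a x| ≤ B₁) →
        (∀ a ∈ Set.Icc a₀ (a₀ + δ₀), ∀ x ∈ Rect d lo hi, ‖fx a x‖ ≤ B₂) →
        (∀ a ∈ Set.Icc a₀ (a₀ + δ₀), ∀ x ∈ Rect d lo hi, ‖fax a x‖ ≤ B₃) →
        (∀ a ∈ Set.Icc a₀ (a₀ + δ₀), ∀ x ∈ Rect d lo hi, ∀ k l, |fxx a x k l| ≤ B₄) →
        ∀ a ∈ Set.Icc a₀ (a₀ + δ₀), ∀ a' ∈ Set.Icc a₀ (a₀ + δ₀),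
          0 < |a' - a| → |a' - a| ≤ ε →
          ∀ x₁ ∈ Rect d lo hi,
            C * |a' - a| ≤ Metric.infDist x₁ (frontier (Rect d lo hi)) →
            ∃ u : EuclideanSpace ℝ (Fin d),
              ‖u‖ ≤ C * |a' - a| ∧ x₁ - u ∈ Rect d lo hi ∧
              fx a' (x₁ - u) = fx a x₁ :=
  tangency_translation_exists_general d c₀ α Cα η Aη B₁ B₂ B₃ B₄
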